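/- arXiv:0802.3487 — 4 statements merged into one kernel-verified Lean document; each statement's English description precedes it below -/
import Mathlib

section
/- Let σ be uniform on {1,…,k} and L a random variable with finitely many values on the same space, and set Xᵢ = P(σ = i | L). Then E[P(σ=1 | L) given σ = 1] - 1/k = E[∑_{i=1}^k (Xᵢ - 1/k)²] when the Xᵢ are exchangeable, and in particular E[X₁ | σ = 1] ≥ 1/k. -/
/-!
Write `p_A = P(A | L)`. Since `p_A` is constant on the fibres of `L`, integrating it over `A`
gives `∑ₛ μ(A ∩ {L = s}) p_A(s) = ∑ₛ μ{L = s} p_A(s)² = E[p_A²]`. For `A = {σ = i}` we have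
`p_A = Xᵢ`, so uniformity of `σ` gives `E[Xᵢ | σ = i] = k E[Xᵢ²]`, and exchangeability makes
`E[Xᵢ²]` independent of `i`. Since `∑ᵢ Xᵢ = 1` almost surely, `∑ᵢ (Xᵢ - 1/k)² = ∑ᵢ Xᵢ² - 1/k`.
-/

open MeasureTheory ProbabilityTheory

theorem Finset.sum_sub_inv_card_sq_of_sum_eq_one {ι : Type*} [Fintype ι] {x : ι → ℝ}
    (hx : ∑ i, x i = 1) :
    ∑ i, (x i - 1 / Fintype.card ι) ^ 2 = ∑ i, x i ^ 2 - 1 / Fintype.card ι := by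
  have hcard : (Fintype.card ι : ℝ) ≠ 0 := by
    have : Nonempty ι := by
      by_contra h
      simp [not_nonempty_iff.mp h] at hx
    positivity
  have hexpand : ∀ i, (x i - 1 / Fintype.card ι) ^ 2
      = x i ^ 2 - 2 / Fintype.card ι * x i + 1 / (Fintype.card ι : ℝ) ^ 2 := fun i => by ring
  simp only [hexpand, Finset.sum_add_distrib, Finset.sum_sub_distrib, ← Finset.mul_sum, hx,
    Finset.sum_const, Finset.card_univ, nsmul_eq_mul]
  field_simp
  ring

namespace ProbabilityTheory

variable {Ω : Type*} [MeasurableSpace Ω] {μ : Measure Ω}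

theorem integral_cond (s : Set Ω) (f : Ω → ℝ) :
    ∫ ω, f ω ∂μ[|s] = (μ.real s)⁻¹ * ∫ ω in s, f ω ∂μ := by
  rw [cond, integral_smul_measure, ENNReal.toReal_inv, smul_eq_mul, measureReal_def]

theorem identDistrib_of_map_perm_eq {ι β : Type*} [Countable ι] [DecidableEq ι]
    [MeasurableSpace β] {X : ι → Ω → β} (hX : ∀ i, AEMeasurable (X i) μ)
    (hexch : ∀ π : Equiv.Perm ι,
      μ.map (fun ω i => X (π i) ω) = μ.map (fun ω i => X i ω)) (i j : ι) :
    IdentDistrib (X i) (X j) μ μ := by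
  have hvec : IdentDistrib (fun ω l => X (Equiv.swap i j l) ω) (fun ω l => X l ω) μ μ :=
    ⟨aemeasurable_pi_lambda _ fun _ => hX _, aemeasurable_pi_lambda _ hX, hexch _⟩
  simpa [Function.comp_def] using hvec.comp (measurable_pi_apply j)

section FiniteValued

variable {S : Type*} [MeasurableSpace S] [Fintype S] [MeasurableSingletonClass S] {L : Ω → S}

theorem integrable_comp_of_fintype (hL : Measurable L) (ν : Measure Ω) [IsFiniteMeasure ν]
    (g : S → ℝ) : Integrable (fun ω => g (L ω)) ν :=
  (Integrable.of_finite : Integrable g (ν.map L)).comp_measurable hL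

theorem integral_comp_eq_sum_of_fintype (hL : Measurable L) (ν : Measure Ω) [IsFiniteMeasure ν]
    (g : S → ℝ) : ∫ ω, g (L ω) ∂ν = ∑ s, ν.real (L ⁻¹' {s}) * g s := by
  rw [← integral_map hL.aemeasurable (measurable_of_countable g).aestronglyMeasurable,
    integral_fintype .of_finite]
  simp only [map_measureReal_apply hL (measurableSet_singleton _), smul_eq_mul]

/-- `P(A | L)` evaluated at `ω`: the probability of `A` given the fibre of `L` through `ω`
(`0` on null fibres). -/
noncomputable def condProbGiven (μ : Measure Ω) (L : Ω → S) (A : Set Ω) (ω : Ω) : ℝ :=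
  (μ[|L ⁻¹' {L ω}] A).toReal

theorem measurable_condProbGiven (hL : Measurable L) (A : Set Ω) :
    Measurable (condProbGiven μ L A) :=
  (measurable_of_countable fun s => (μ[|L ⁻¹' {s}] A).toReal).comp hL

theorem setIntegral_condProbGiven_eq_integral_sq [IsFiniteMeasure μ] (hL : Measurable L)
    (A : Set Ω) : ∫ ω in A, condProbGiven μ L A ω ∂μ = ∫ ω, condProbGiven μ L A ω ^ 2 ∂μ := by
  let p : S → ℝ := fun s => (μ[|L ⁻¹' {s}] A).toReal
  change ∫ ω in A, p (L ω) ∂μ = ∫ ω, (fun s => p s ^ 2) (L ω) ∂μ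
  rw [integral_comp_eq_sum_of_fintype hL, integral_comp_eq_sum_of_fintype hL μ fun s => p s ^ 2]
  refine Finset.sum_congr rfl fun s _ => ?_
  have hfibre : MeasurableSet (L ⁻¹' {s}) := hL (measurableSet_singleton s)
  have hinter : (μ.restrict A).real (L ⁻¹' {s}) = p s * μ.real (L ⁻¹' {s}) := by
    rw [measureReal_restrict_apply hfibre, measureReal_def, measureReal_def,
      ← cond_mul_eq_inter hfibre, ENNReal.toReal_mul]
  rw [hinter]
  ring

theorem ae_measure_fibre_ne_zero (hL : Measurable L) : ∀ᵐ ω ∂μ, μ (L ⁻¹' {L ω}) ≠ 0 := by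
  refine ae_of_ae_map (p := fun s => μ (L ⁻¹' {s}) ≠ 0) hL.aemeasurable
    (ae_iff_of_countable.mpr fun s hs => ?_)
  rwa [Measure.map_apply hL (measurableSet_singleton s)] at hs

theorem ae_sum_condProbGiven_eq_one [IsFiniteMeasure μ] {ι : Type*} [Fintype ι]
    [MeasurableSpace ι] [MeasurableSingletonClass ι] {σ : Ω → ι} (hσ : Measurable σ)
    (hL : Measurable L) : ∀ᵐ ω ∂μ, ∑ i, condProbGiven μ L (σ ⁻¹' {i}) ω = 1 := by
  filter_upwards [ae_measure_fibre_ne_zero hL] with ω hω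
  have : IsProbabilityMeasure μ[|L ⁻¹' {L ω}] := cond_isProbabilityMeasure hω
  simpa [condProbGiven, measureReal_def] using
    sum_measureReal_preimage_singleton (μ := μ[|L ⁻¹' {L ω}]) Finset.univ
      fun i _ => hσ (measurableSet_singleton i)

end FiniteValued

end ProbabilityTheory

theorem stmt_7_general {Ω S : Type*} [MeasurableSpace Ω] [MeasurableSpace S]
    [Fintype S] [MeasurableSingletonClass S]
    (μ : Measure Ω) [IsProbabilityMeasure μ]
    (k : ℕ) (σ : Ω → Fin k) (L : Ω → S)
    (hσ : Measurable σ) (hL : Measurable L)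
    (huniform : ∀ i, μ (σ ⁻¹' {i}) = 1 / k)
    (X : Fin k → Ω → ℝ)
    (i₀ : Fin k) (hX : ∀ i ω, X i ω = (μ[|L ⁻¹' {L ω}] (σ ⁻¹' {i})).toReal)
    (hexch : ∀ π : Equiv.Perm (Fin k),
      Measure.map (fun ω (i : Fin k) => X (π i) ω) μ
        = Measure.map (fun ω (i : Fin k) => X i ω) μ) :
    (∫ ω, X i₀ ω ∂(μ[|σ ⁻¹' {i₀}])) - 1 / k
        = ∫ ω, ∑ i, (X i ω - 1 / k) ^ 2 ∂μ
      ∧ 1 / (k : ℝ) ≤ ∫ ω, X i₀ ω ∂(μ[|σ ⁻¹' {i₀}]) := by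
  obtain rfl : X = fun i => condProbGiven μ L (σ ⁻¹' {i}) := funext₂ hX
  have hsq_int : ∀ i, Integrable (fun ω => condProbGiven μ L (σ ⁻¹' {i}) ω ^ 2) μ := fun i =>
    integrable_comp_of_fintype hL μ fun s => (μ[|L ⁻¹' {s}] (σ ⁻¹' {i})).toReal ^ 2
  have hident : ∀ i, IdentDistrib (condProbGiven μ L (σ ⁻¹' {i}))
      (condProbGiven μ L (σ ⁻¹' {i₀})) μ μ := fun i =>
    identDistrib_of_map_perm_eq (fun j => (measurable_condProbGiven hL (σ ⁻¹' {j})).aemeasurable)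
      hexch i i₀
  have hsq_eq : ∀ i, ∫ ω, condProbGiven μ L (σ ⁻¹' {i}) ω ^ 2 ∂μ
      = ∫ ω, condProbGiven μ L (σ ⁻¹' {i₀}) ω ^ 2 ∂μ := fun i =>
    ((hident i).comp (measurable_id.pow_const 2)).integral_eq
  have hlhs : ∫ ω, condProbGiven μ L (σ ⁻¹' {i₀}) ω ∂μ[|σ ⁻¹' {i₀}]
      = k * ∫ ω, condProbGiven μ L (σ ⁻¹' {i₀}) ω ^ 2 ∂μ := by
    rw [integral_cond, setIntegral_condProbGiven_eq_integral_sq hL, measureReal_def, huniform]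
    simp
  have hrhs : ∫ ω, ∑ i, (condProbGiven μ L (σ ⁻¹' {i}) ω - 1 / k) ^ 2 ∂μ
      = k * ∫ ω, condProbGiven μ L (σ ⁻¹' {i₀}) ω ^ 2 ∂μ - 1 / k := by
    have hpointwise := (ae_sum_condProbGiven_eq_one (μ := μ) hσ hL).mono fun ω hω =>
      Finset.sum_sub_inv_card_sq_of_sum_eq_one hω
    simp only [Fintype.card_fin] at hpointwise
    rw [integral_congr_ae hpointwise, integral_sub (integrable_finsetSum _ fun i _ => hsq_int i)
      (integrable_const _), integral_finsetSum _ fun i _ => hsq_int i]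
    simp [hsq_eq]
  have hmain : ∫ ω, condProbGiven μ L (σ ⁻¹' {i₀}) ω ∂μ[|σ ⁻¹' {i₀}] - 1 / k
      = ∫ ω, ∑ i, (condProbGiven μ L (σ ⁻¹' {i}) ω - 1 / k) ^ 2 ∂μ := by
    rw [hlhs, hrhs]
  refine ⟨hmain, sub_nonneg.mp (hmain ▸ integral_nonneg fun ω => ?_)⟩
  exact Finset.sum_nonneg fun i _ => sq_nonneg _

theorem stmt_7 {Ω S : Type*} [MeasurableSpace Ω] [MeasurableSpace S]
    [Fintype S] [MeasurableSingletonClass S]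
    (μ : Measure Ω) [IsProbabilityMeasure μ]
    (k : ℕ) (hk : 2 ≤ k) (σ : Ω → Fin k) (L : Ω → S)
    (hσ : Measurable σ) (hL : Measurable L)
    (huniform : ∀ i, μ (σ ⁻¹' {i}) = 1 / k)
    (X : Fin k → Ω → ℝ)
    (i₀ : Fin k) (hX : ∀ i ω, X i ω = (μ[|L ⁻¹' {L ω}] (σ ⁻¹' {i})).toReal)
    (hexch : ∀ π : Equiv.Perm (Fin k),
      Measure.map (fun ω (i : Fin k) => X (π i) ω) μ
        = Measure.map (fun ω (i : Fin k) => X i ω) μ) :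
    (∫ ω, X i₀ ω ∂(μ[|σ ⁻¹' {i₀}])) - 1 / k
        = ∫ ω, ∑ i, (X i ω - 1 / k) ^ 2 ∂μ
      ∧ 1 / (k : ℝ) ≤ ∫ ω, X i₀ ω ∂(μ[|σ ⁻¹' {i₀}]) :=
  stmt_7_general μ k σ L hσ hL huniform X i₀ hX hexch
end

section
/- Let (b₁,…,b_k) be multinomial M(n,(1/k,…,1/k)) and let b̃₁,…,b̃_k be i.i.d. Poisson(D). There exists a coupling of these random vectors such that whenever ∑_j b̃_j ≥ n one has bᵢ ≤ b̃ᵢ for all i, and whenever ∑_j b̃_j ≤ n one has bᵢ ≥ b̃ᵢ for all i. -/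
/-!
Poissonization. Throw `N ~ Poisson(kD)` balls independently and uniformly into `k` boxes. Given
`N = m` the box counts are `M(m, (1/k, …, 1/k))`, so a count vector `a` with `∑ a = m` has
probability `Po(kD){m} · multinomial(a) / k^m = ∏ Po(D){a i}`: the counts are i.i.d. `Poisson(D)`.
For the coupling, read both vectors off one sequence of balls: `b` counts the first `n` balls and
`b̃` the first `N`. Counts over a prefix grow with its length and `∑ b̃ = N`, which gives both
inequalities.
-/

open MeasureTheory ProbabilityTheory
open scoped NNReal ENNReal

/-- The multinomial distribution `M(n, (1/k, …, 1/k))`: the law of the vector of counts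
of `n` balls placed independently and uniformly at random into `k` boxes. -/
noncomputable def multinomialUniform (n k : ℕ) [NeZero k] : Measure (Fin k → ℕ) :=
  Measure.map (fun f i => (Finset.univ.filter fun j : Fin n => f j = i).card)
    (PMF.uniformOfFintype (Fin n → Fin k)).toMeasure

open Finset Function
open scoped Nat

section FiberCard

variable {α β ι : Type*} [Fintype α] [Fintype β] [DecidableEq ι]

def fiberCard (f : α → ι) (i : ι) : ℕ := #{x | f x = i}

lemma card_subtype_eq_fiberCard (f : α → ι) (i : ι) :
    Fintype.card {x // f x = i} = fiberCard f i :=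
  Fintype.card_subtype _

lemma fiberCard_comp_le (f : β → ι) {e : α → β} (he : Injective e) (i : ι) :
    fiberCard (f ∘ e) i ≤ fiberCard f i :=
  card_le_card_of_injOn e (fun x hx => by simpa using hx) he.injOn

lemma fiberCard_comp_castLE_mono {M N N' : ℕ} (f : Fin M → ι)
    (hN : N ≤ M) (hN' : N' ≤ M) (h : N ≤ N') (i : ι) :
    fiberCard (f ∘ Fin.castLE hN) i ≤ fiberCard (f ∘ Fin.castLE hN') i :=
  fiberCard_comp_le (f ∘ Fin.castLE hN') (Fin.castLE_injective h) i

lemma fiberCard_comp_equiv (f : β → ι) (e : α ≃ β) : fiberCard (f ∘ e) = fiberCard f := by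
  funext i
  refine (fiberCard_comp_le f e.injective i).antisymm ?_
  simpa [Function.comp_def] using fiberCard_comp_le (f ∘ e) e.symm.injective i

lemma sum_fiberCard [Fintype ι] (f : α → ι) : ∑ i, fiberCard f i = Fintype.card α :=
  (card_eq_sum_card_fiberwise fun x _ => mem_univ (f x)).symm

lemma exists_fiberCard_eq [Fintype ι] (a : ι → ℕ) (ha : ∑ i, a i = Fintype.card α) :
    ∃ f : α → ι, fiberCard f = a := by
  let e : α ≃ Σ i, Fin (a i) := Fintype.equivOfCardEq (by simp [ha])
  refine ⟨Sigma.fst ∘ e, ?_⟩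
  rw [fiberCard_comp_equiv]
  funext i
  rw [fiberCard, card_filter, Fintype.sum_sigma]
  simp [apply_ite]

lemma exists_perm_comp_eq_of_fiberCard_eq [DecidableEq α] {f g : α → ι}
    (h : fiberCard f = fiberCard g) : ∃ σ : Equiv.Perm α, g ∘ σ = f :=
  ⟨Equiv.ofFiberEquiv fun i => Fintype.equivOfCardEq (by
    rw [card_subtype_eq_fiberCard, card_subtype_eq_fiberCard, h]),
    funext (Equiv.ofFiberEquiv_map _)⟩

lemma card_perm_comp_eq_of_fiberCard_eq [DecidableEq α] [Fintype ι] {f g : α → ι}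
    (h : fiberCard f = fiberCard g) :
    Fintype.card {σ : Equiv.Perm α // g ∘ σ = f} = ∏ i, (fiberCard g i)! := by
  obtain ⟨τ, rfl⟩ := exists_perm_comp_eq_of_fiberCard_eq h
  rw [← Fintype.card_congr (α := {σ : Equiv.Perm α // g ∘ σ = g})
    ((Equiv.mulRight τ).subtypeEquiv fun σ => ?_), DomMulAct.stabilizer_card]
  · simp only [card_subtype_eq_fiberCard]
  · exact (τ.surjective.injective_comp_right.eq_iff (a := g ∘ σ)).symm

lemma card_filter_fiberCard_eq [DecidableEq α] [Fintype ι] (a : ι → ℕ)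
    (ha : ∑ i, a i = Fintype.card α) :
    #{f : α → ι | fiberCard f = a} = Nat.multinomial univ a := by
  obtain ⟨g, hg⟩ := exists_fiberCard_eq a ha
  -- orbit–stabilizer: `σ ↦ g ∘ σ` maps `Perm α` onto this set with fibers of size `∏ (a i)!`
  have hperm : (Fintype.card α)! = #{f : α → ι | fiberCard f = a} * ∏ i, (a i)! := by
    rw [← Fintype.card_perm, ← card_univ,
      card_eq_sum_card_fiberwise (f := fun σ : Equiv.Perm α => g ∘ σ)
        (t := {f : α → ι | fiberCard f = a}) fun σ _ => by
          simp [fiberCard_comp_equiv, hg]]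
    refine sum_const_nat fun f hf => ?_
    rw [← hg, ← card_perm_comp_eq_of_fiberCard_eq ((mem_filter.mp hf).2.trans hg.symm),
      Fintype.card_subtype]
  have hspec := Nat.multinomial_spec univ a
  rw [ha, hperm, mul_comm] at hspec
  exact (Nat.eq_of_mul_eq_mul_right (prod_pos fun i _ => (a i).factorial_pos) hspec).symm

end FiberCard

namespace PMF
variable {X Y : Type*} [Fintype X] [Fintype Y] [Nonempty X] [Nonempty Y] [DecidableEq Y]

theorem map_uniformOfFintype_of_card_fiber (f : X → Y) (c : ℕ)
    (h : ∀ y, Fintype.card {x // f x = y} = c) :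
    (uniformOfFintype X).map f = uniformOfFintype Y := by
  have hX : Fintype.card X = c * Fintype.card Y := by
    rw [Fintype.card_congr (Equiv.sigmaFiberEquiv f).symm, Fintype.card_sigma]
    simp [h, mul_comm]
  have hc : (c : ℝ≥0∞) ≠ 0 := by
    have := Fintype.card_ne_zero (α := X)
    rw [hX] at this
    exact_mod_cast left_ne_zero_of_mul this
  ext y
  rw [map_apply, tsum_fintype]
  simp only [uniformOfFintype_apply]
  rw [sum_ite, sum_const_zero, add_zero, sum_const, nsmul_eq_mul, ← Fintype.card_subtype]
  simp_rw [eq_comm (a := y), h, hX, Nat.cast_mul]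
  rw [ENNReal.mul_inv (.inl hc) (.inl (ENNReal.natCast_ne_top c)), ← mul_assoc,
    ENNReal.mul_inv_cancel hc (ENNReal.natCast_ne_top c), one_mul]

end PMF

section Restrict
variable {α β ι : Type*} [Fintype α] [Fintype β] [Fintype ι] [DecidableEq β] [DecidableEq ι]

lemma card_comp_eq_eq_pow {e : α → β} (he : Injective e) (g : α → ι) :
    Fintype.card {f : β → ι // f ∘ e = g} =
      Fintype.card ι ^ Fintype.card {b // b ∉ Set.range e} := by
  let E := Equiv.ofInjective e he
  have hE : ∀ f : β → ι, f ∘ e = g ↔ f ∘ Subtype.val = g ∘ E.symm := fun f => by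
    rw [Equiv.eq_comp_symm]; rfl
  rw [Fintype.card_congr ((Equiv.subtypeEquivRight hE).trans (Equiv.subtypePreimage _ _)),
    Fintype.card_fun]

variable [DecidableEq α] [Nonempty ι] [MeasurableSpace ι]

lemma map_comp_uniformOfFintype {e : α → β} (he : Injective e) :
    (PMF.uniformOfFintype (β → ι)).toMeasure.map (· ∘ e) =
      (PMF.uniformOfFintype (α → ι)).toMeasure := by
  have hm : Measurable fun f : β → ι => f ∘ e :=
    measurable_pi_lambda _ fun a => measurable_pi_apply (e a)
  rw [PMF.toMeasure_map _ _ hm,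
    PMF.map_uniformOfFintype_of_card_fiber _ _ (card_comp_eq_eq_pow he)]

end Restrict

section Multinomial
variable {k : ℕ} [NeZero k]

lemma multinomialUniform_eq_map (n : ℕ) :
    multinomialUniform n k = (PMF.uniformOfFintype (Fin n → Fin k)).toMeasure.map fiberCard :=
  rfl

lemma multinomialUniform_singleton (a : Fin k → ℕ) :
    multinomialUniform (∑ i, a i) k {a} = Nat.multinomial univ a / k ^ (∑ i, a i) := by
  classical
  rw [multinomialUniform_eq_map,
    Measure.map_apply Measurable.of_discrete (measurableSet_singleton a),
    PMF.toMeasure_uniformOfFintype_apply _ MeasurableSet.of_discrete]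
  simp only [Set.mem_preimage, Set.mem_singleton_iff, Fintype.card_subtype, Fintype.card_fun,
    Fintype.card_fin]
  rw [card_filter_fiberCard_eq a (Fintype.card_fin _).symm, Nat.cast_pow]

lemma multinomialUniform_singleton_of_sum_ne {n : ℕ} {a : Fin k → ℕ} (h : ∑ i, a i ≠ n) :
    multinomialUniform n k {a} = 0 := by
  have : fiberCard ⁻¹' {a} = (∅ : Set (Fin n → Fin k)) :=
    Set.eq_empty_of_forall_notMem fun f hf =>
      h (by rw [← show fiberCard f = a from hf, sum_fiberCard, Fintype.card_fin])
  rw [multinomialUniform_eq_map,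
    Measure.map_apply Measurable.of_discrete (measurableSet_singleton a), this, measure_empty]

theorem poissonMeasure_bind_multinomialUniform (D : ℝ≥0) :
    (poissonMeasure (k * D)).bind (multinomialUniform · k) =
      Measure.pi fun _ : Fin k => poissonMeasure D := by
  refine Measure.ext_of_singleton fun a => ?_
  rw [Measure.bind_apply (measurableSet_singleton a) Measurable.of_discrete.aemeasurable,
    lintegral_countable', tsum_eq_single (∑ i, a i) fun m hm => by
      rw [multinomialUniform_singleton_of_sum_ne (Ne.symm hm), zero_mul],
    multinomialUniform_singleton, ← Set.univ_pi_singleton, Measure.pi_pi]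
  simp only [poissonMeasure_singleton]
  have hk : (0 : ℝ) < k := by exact_mod_cast Nat.pos_of_ne_zero (NeZero.ne k)
  have hspec : (∏ i, ((a i)! : ℝ)) * Nat.multinomial univ a = (∑ i, a i)! := by
    exact_mod_cast Nat.multinomial_spec univ a
  rw [← ENNReal.ofReal_natCast, ← ENNReal.ofReal_natCast k, ← ENNReal.ofReal_pow hk.le,
    ← ENNReal.ofReal_div_of_pos (pow_pos hk _), ← ENNReal.ofReal_mul (by positivity),
    ← ENNReal.ofReal_prod_of_nonneg fun i _ => by positivity]
  congr 1
  rw [prod_div_distrib, prod_mul_distrib, prod_const, prod_pow_eq_pow_sum, card_univ,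
    Fintype.card_fin, ← Real.exp_nat_mul]
  set m := ∑ i, a i
  push_cast
  field_simp
  linear_combination ((k : ℝ) * D) ^ m * hspec

lemma map_fiberCard_comp_castLE {n M : ℕ} (h : n ≤ M) :
    (PMF.uniformOfFintype (Fin M → Fin k)).toMeasure.map
        (fun f => fiberCard (f ∘ Fin.castLE h)) = multinomialUniform n k := by
  have hm : Measurable fun f : Fin M → Fin k => f ∘ Fin.castLE h := Measurable.of_discrete
  rw [multinomialUniform_eq_map, ← map_comp_uniformOfFintype (Fin.castLE_injective h),
    Measure.map_map Measurable.of_discrete hm]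
  rfl

end Multinomial

namespace MeasureTheory.Measure
variable {α β γ : Type*} [MeasurableSpace α] [MeasurableSpace β] [MeasurableSpace γ]

lemma map_bind {m : Measure α} {f : α → Measure β} (hf : Measurable f) {g : β → γ}
    (hg : Measurable g) : (m.bind f).map g = m.bind fun a => (f a).map g := by
  rw [bind, ← join_map_map hg, map_map (measurable_map g hg) hf]
  rfl

lemma ae_bind_of_forall {m : Measure α} {f : α → Measure β} (hf : AEMeasurable f m)
    {p : β → Prop} (hp : MeasurableSet {x | p x}) (h : ∀ a, ∀ᵐ x ∂f a, p x) :
    ∀ᵐ x ∂m.bind f, p x := by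
  have h' : ∀ a, f a {x | ¬p x} = 0 := fun a => ae_iff.mp (h a)
  rw [ae_iff, ← Set.compl_ofPred, bind_apply hp.compl hf]
  simp only [Set.compl_ofPred, h', lintegral_zero]

end MeasureTheory.Measure

section Coupling
variable {ι : Type*} [Fintype ι] [DecidableEq ι]

def prefixFiberCards (n m : ℕ) (f : Fin (max m n) → ι) : (ι → ℕ) × (ι → ℕ) :=
  (fiberCard (f ∘ Fin.castLE (le_max_right m n)), fiberCard (f ∘ Fin.castLE (le_max_left m n)))

lemma prefixFiberCards_spec (n m : ℕ) (f : Fin (max m n) → ι) :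
    let c := prefixFiberCards n m f
    (n ≤ ∑ j, c.2 j → ∀ i, c.1 i ≤ c.2 i) ∧ (∑ j, c.2 j ≤ n → ∀ i, c.2 i ≤ c.1 i) := by
  simp only [prefixFiberCards, sum_fiberCard, Fintype.card_fin]
  exact ⟨fun h => fiberCard_comp_castLE_mono f _ _ h, fun h => fiberCard_comp_castLE_mono f _ _ h⟩

end Coupling

theorem stmt_10_general (k : ℕ) [NeZero k] (n : ℕ) (D : ℝ≥0) :
    ∃ (Ω : Type) (_ : MeasurableSpace Ω) (μ : Measure Ω) (_ : IsProbabilityMeasure μ)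
      (b bt : Ω → Fin k → ℕ),
      Measurable b ∧ Measurable bt ∧
      Measure.map b μ = multinomialUniform n k ∧
      Measure.map bt μ = Measure.pi (fun _ : Fin k => poissonMeasure D) ∧
      ∀ᵐ ω ∂μ,
        ((n ≤ ∑ j, bt ω j → ∀ i, b ω i ≤ bt ω i) ∧
         (∑ j, bt ω j ≤ n → ∀ i, bt ω i ≤ b ω i)) := by
  let κ : ℕ → Measure ((Fin k → ℕ) × (Fin k → ℕ)) := fun m =>
    (PMF.uniformOfFintype (Fin (max m n) → Fin k)).toMeasure.map (prefixFiberCards n m)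
  have hκ : Measurable κ := Measurable.of_discrete
  have hκ_fst : ∀ m, (κ m).map Prod.fst = multinomialUniform n k := fun m => by
    rw [Measure.map_map measurable_fst Measurable.of_discrete]
    exact map_fiberCard_comp_castLE (le_max_right m n)
  have hκ_snd : ∀ m, (κ m).map Prod.snd = multinomialUniform m k := fun m => by
    rw [Measure.map_map measurable_snd Measurable.of_discrete]
    exact map_fiberCard_comp_castLE (le_max_left m n)
  refine ⟨_, inferInstance, (poissonMeasure (k * D)).bind κ,
    isProbabilityMeasure_bind hκ.aemeasurable
      (.of_forall fun _ => Measure.isProbabilityMeasure_map Measurable.of_discrete.aemeasurable),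
    Prod.fst, Prod.snd, measurable_fst, measurable_snd, ?_, ?_, ?_⟩
  · simp_rw [Measure.map_bind hκ measurable_fst, hκ_fst, Measure.bind_const, measure_univ,
      one_smul]
  · simp_rw [Measure.map_bind hκ measurable_snd, hκ_snd]
    exact poissonMeasure_bind_multinomialUniform D
  · refine Measure.ae_bind_of_forall hκ.aemeasurable MeasurableSet.of_discrete fun m => ?_
    exact (ae_map_iff Measurable.of_discrete.aemeasurable MeasurableSet.of_discrete).mpr
      (.of_forall (prefixFiberCards_spec n m))

theorem stmt_10 (k : ℕ) [NeZero k] (n : ℕ) (D : ℝ≥0) (hD : 0 < D) :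
    ∃ (Ω : Type) (_ : MeasurableSpace Ω) (μ : Measure Ω) (_ : IsProbabilityMeasure μ)
      (b bt : Ω → Fin k → ℕ),
      Measurable b ∧ Measurable bt ∧
      Measure.map b μ = multinomialUniform n k ∧
      Measure.map bt μ = Measure.pi (fun _ : Fin k => poissonMeasure D) ∧
      ∀ᵐ ω ∂μ,
        ((n ≤ ∑ j, bt ω j → ∀ i, b ω i ≤ bt ω i) ∧
         (∑ j, bt ω j ≤ n → ∀ i, bt ω i ≤ b ω i)) :=
  stmt_10_general k n D
end

section
/- Let β* < 1 - log 2, and for each integer k ≥ 2 set D = D(k) = log k + log log k + β*. Suppose p = p(k) satisfies k·p(k) → 0. Define a sequence by y₀ = 1 and y_{n+1} = g(y_n) where g(y) = p + (1 - exp(-(k-1)·exp(-yD)))/((k-1)·exp(-yD)). Then for all sufficiently large k, limsup_n y_n < 2/k. -/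
/-!
With `x = (k - 1) e^{-zD}` the map is `g(z) = p + (1 - e^{-x}) / x`. It suffices to show that
`g ≤ 3/(2k)` on `[0, 2/k]` and `g(z) ≤ z - 1/(2k)` on `[2/k, 1]`: the orbit of `1` then drops into
`[0, 2/k]` and stays below `3/(2k)`.

Up to some fixed `a < 1` the crude bound `(1 - e^{-x}) / x ≤ 1/x = e^{zD} / (k - 1)` suffices; it is
convex in `z`, so it is enough to check it at `z = 2/k` and `z = a`. On `[a, 1]` one uses
`(1 - e^{-x}) / x ≤ 2 / (2 + x)` and
`x = (k - 1) e^{-D} e^{(1 - z)D} ≥ (k - 1) e^{-D} max(1, e (1 - z) D)`, where `(k - 1) e^{-D} D → e^{-β}`.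
This needs `a e^{1 - β} > 2`, and `β < 1 - log 2` is exactly what makes such an `a < 1` exist.
-/

open Filter Real Set Topology

theorem one_sub_exp_neg_div_nonneg (x : ℝ) : 0 ≤ (1 - exp (-x)) / x := by
  rcases le_or_gt 0 x with hx | hx
  · exact div_nonneg (by simpa using exp_le_one_iff.2 (neg_nonpos.2 hx)) hx
  · exact div_nonneg_of_nonpos (by simpa using one_le_exp (neg_nonneg.2 hx.le)) hx.le

theorem one_sub_exp_neg_div_le_inv {x : ℝ} (hx : 0 < x) : (1 - exp (-x)) / x ≤ x⁻¹ := by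
  rw [← one_div]
  exact div_le_div_of_nonneg_right (by linarith [exp_pos (-x)]) hx.le

theorem one_sub_exp_neg_div_le_two_div {x : ℝ} (hx : 0 < x) :
    (1 - exp (-x)) / x ≤ 2 / (2 + x) := by
  have hpade : 2 - x ≤ (2 + x) * exp (-x) := by
    rcases le_or_gt 2 x with h2 | h2
    · nlinarith [exp_pos (-x)]
    · have h := exp_le_two_add_div_two_sub hx.le h2
      rw [le_div_iff₀ (by linarith)] at h
      calc 2 - x = exp x * (2 - x) * exp (-x) := by
            rw [mul_right_comm, ← exp_add, add_neg_cancel, exp_zero, one_mul]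
        _ ≤ (2 + x) * exp (-x) := by gcongr
  rw [div_le_div_iff₀ hx (by linarith)]
  linarith

theorem mul_exp_one_mul_add_one_sub_le_exp {s θ : ℝ} (hs : 0 ≤ s) (hθ0 : 0 ≤ θ) (hθ1 : θ ≤ 1) :
    θ * (exp 1 * s) + (1 - θ) ≤ exp s := by
  nlinarith [exp_one_mul_le_exp (x := s), one_le_exp hs]

theorem limsup_le_of_descent {G : ℝ → ℝ} {w : ℕ → ℝ} {b c δ : ℝ} (hδ : 0 < δ) (hcb : c ≤ b)
    (hc : c ≤ 1) (hG : ∀ z ∈ Icc 0 1, 0 ≤ G z) (hlow : ∀ z ∈ Icc 0 b, G z ≤ c)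
    (hhigh : ∀ z ∈ Icc b 1, G z ≤ z - δ) (hw0 : w 0 ∈ Icc 0 1)
    (hw : ∀ n, w (n + 1) = G (w n)) : limsup w atTop ≤ c := by
  have hmem : ∀ n, w n ∈ Icc 0 1 := by
    intro n
    induction n with
    | zero => exact hw0
    | succ n ih =>
      rw [hw]
      refine ⟨hG _ ih, ?_⟩
      rcases le_or_gt (w n) b with h | h
      · exact (hlow _ ⟨ih.1, h⟩).trans hc
      · linarith [hhigh _ ⟨h.le, ih.2⟩, ih.2]
  obtain ⟨N, hN⟩ : ∃ N, w N ≤ b := by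
    by_contra! hgt
    have hdecr : ∀ n : ℕ, w n ≤ 1 - n * δ := by
      intro n
      induction n with
      | zero => simpa using (hmem 0).2
      | succ n ih =>
        rw [hw]
        push_cast
        linarith [hhigh _ ⟨(hgt n).le, (hmem n).2⟩]
    obtain ⟨n, hn⟩ := exists_nat_gt δ⁻¹
    have := (hmem n).1
    rw [inv_lt_iff_one_lt_mul₀ hδ, mul_comm] at hn
    linarith [hdecr n]
  have htail : ∀ n ≥ N, w n ≤ b := by
    intro n hn
    induction n, hn using Nat.le_induction with
    | base => exact hN
    | succ n _ ih => rw [hw]; exact (hlow _ ⟨(hmem n).1, ih⟩).trans hcb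
  refine limsup_le_of_le (isCoboundedUnder_le_of_le atTop fun n => (hmem n).1) ?_
  filter_upwards [eventually_gt_atTop N] with n hn
  obtain ⟨m, rfl⟩ := Nat.exists_eq_add_one_of_ne_zero (by omega : n ≠ 0)
  rw [hw]
  exact hlow _ ⟨(hmem m).1, htail m (by omega)⟩

noncomputable def recursionMap (K d P z : ℝ) : ℝ :=
  P + (1 - exp (-((K - 1) * exp (-(z * d))))) / ((K - 1) * exp (-(z * d)))

section recursionMap

variable {K d P z : ℝ}

theorem recursionMap_nonneg (hP : 0 ≤ P) : 0 ≤ recursionMap K d P z :=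
  add_nonneg hP (one_sub_exp_neg_div_nonneg _)

theorem recursionMap_le_add_exp_div (hK : 1 < K) :
    recursionMap K d P z ≤ P + exp (z * d) / (K - 1) := by
  have hx : 0 < (K - 1) * exp (-(z * d)) := mul_pos (by linarith) (exp_pos _)
  have hinv : ((K - 1) * exp (-(z * d)))⁻¹ = exp (z * d) / (K - 1) := by
    rw [mul_inv, exp_neg, inv_inv, inv_mul_eq_div]
  exact add_le_add le_rfl ((one_sub_exp_neg_div_le_inv hx).trans_eq hinv)

theorem recursionMap_le_of_le {b : ℝ} (hK : 1 < K) (hd : 0 ≤ d) (hzb : z ≤ b) :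
    recursionMap K d P z ≤ P + exp (b * d) / (K - 1) := by
  refine (recursionMap_le_add_exp_div hK).trans ?_
  gcongr

theorem recursionMap_le_sub_of_mem_Icc {a b δ : ℝ} (hK : 1 < K)
    (hb : P + exp (b * d) / (K - 1) ≤ b - δ) (ha : P + exp (a * d) / (K - 1) ≤ a - δ)
    (hz : z ∈ Icc b a) : recursionMap K d P z ≤ z - δ := by
  rw [← segment_eq_Icc (hz.1.trans hz.2)] at hz
  obtain ⟨μ, ν, hμ, hν, hμν, rfl⟩ := hz
  have hexp := convexOn_exp.2 (mem_univ (b * d)) (mem_univ (a * d)) hμ hν hμν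
  simp only [smul_eq_mul] at hexp ⊢
  have hK1 : K - 1 ≠ 0 := by linarith
  calc recursionMap K d P (μ * b + ν * a)
      ≤ P + exp (μ * (b * d) + ν * (a * d)) / (K - 1) := by
        convert recursionMap_le_add_exp_div hK using 4; ring
    _ ≤ P + (μ * exp (b * d) + ν * exp (a * d)) / (K - 1) := by
        gcongr
    _ = μ * (P + exp (b * d) / (K - 1)) + ν * (P + exp (a * d) / (K - 1)) := by
        field_simp
        linear_combination (1 - K) * P * hμν
    _ ≤ μ * (b - δ) + ν * (a - δ) := by gcongr
    _ = μ * b + ν * a - δ := by linear_combination (-δ) * hμν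

theorem recursionMap_le_sub_of_le {a θ δ : ℝ} (hK : 1 < K) (hd : 0 ≤ d)
    (hθ0 : 0 ≤ θ) (hθ1 : θ ≤ 1)
    (h₁ : 2 ≤ θ * (a - (P + δ)) * ((K - 1) * exp (-d)) * (exp 1 * d))
    (h₂ : 2 * (P + δ) ≤ (1 - θ) * (a - (P + δ)) * ((K - 1) * exp (-d)))
    (haz : a ≤ z) (hz1 : z ≤ 1) : recursionMap K d P z ≤ z - δ := by
  set q := P + δ
  set A := (K - 1) * exp (-d)
  set x := (K - 1) * exp (-(z * d))
  have hA : 0 < A := mul_pos (by linarith) (exp_pos _)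
  have hx : 0 < x := mul_pos (by linarith) (exp_pos _)
  have hqa : 0 < a - q := by
    by_contra! h
    have : 0 ≤ θ * A * (exp 1 * d) := by positivity
    nlinarith
  have hxA : A * (θ * (exp 1 * ((1 - z) * d)) + (1 - θ)) ≤ x := by
    have hsplit : x = A * exp ((1 - z) * d) := by
      simp only [x, A, mul_assoc, ← exp_add]
      ring_nf
    rw [hsplit]
    gcongr
    exact mul_exp_one_mul_add_one_sub_le_exp (by nlinarith) hθ0 hθ1
  have hkey : 2 * (1 - z) + 2 * q ≤ (z - q) * x := by
    calc 2 * (1 - z) + 2 * q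
        ≤ (1 - z) * (θ * (a - q) * A * (exp 1 * d)) + (1 - θ) * (a - q) * A := by
          linarith [mul_le_mul_of_nonneg_left h₁ (sub_nonneg.2 hz1)]
      _ = (a - q) * (A * (θ * (exp 1 * ((1 - z) * d)) + (1 - θ))) := by ring
      _ ≤ (z - q) * x := by gcongr; linarith
  have hfx : (1 - exp (-x)) / x ≤ z - q :=
    (one_sub_exp_neg_div_le_two_div hx).trans <| by
      rw [div_le_iff₀ (by linarith)]
      linarith
  simp only [recursionMap, x, q] at hfx ⊢
  linarith

end recursionMap

theorem limsup_orbit_recursionMap_le {K d P a θ b δ : ℝ} {w : ℕ → ℝ} (hK : 1 < K) (hd : 0 ≤ d)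
    (hP : 0 ≤ P) (hδ : 0 < δ) (hθ0 : 0 ≤ θ) (hθ1 : θ ≤ 1) (hb : b ≤ 1)
    (hlow : P + exp (b * d) / (K - 1) ≤ b - δ) (hmid : P + exp (a * d) / (K - 1) ≤ a - δ)
    (hhigh₁ : 2 ≤ θ * (a - (P + δ)) * ((K - 1) * exp (-d)) * (exp 1 * d))
    (hhigh₂ : 2 * (P + δ) ≤ (1 - θ) * (a - (P + δ)) * ((K - 1) * exp (-d)))
    (hw0 : w 0 = 1) (hw : ∀ n, w (n + 1) = recursionMap K d P (w n)) :
    limsup w atTop ≤ b - δ := by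
  refine limsup_le_of_descent hδ (by linarith) (by linarith) (fun _ _ => recursionMap_nonneg hP)
    (fun z hz => (recursionMap_le_of_le hK hd hz.2).trans hlow) (fun z hz => ?_)
    (by simp [hw0]) hw
  rcases le_total z a with hza | haz
  · exact recursionMap_le_sub_of_mem_Icc hK hlow hmid ⟨hz.1, hza⟩
  · exact recursionMap_le_sub_of_le hK hd hθ0 hθ1 hhigh₁ hhigh₂ haz hz.2

theorem tendsto_log_natCast_atTop : Tendsto (fun k : ℕ => log k) atTop atTop :=
  tendsto_log_atTop.comp tendsto_natCast_atTop_atTop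

theorem tendsto_log_natCast_div_natCast : Tendsto (fun k : ℕ => log k / k) atTop (𝓝 0) := by
  simpa [Function.comp_def] using
    (tendsto_pow_log_div_mul_add_atTop 1 0 1 one_ne_zero).comp tendsto_natCast_atTop_atTop

theorem tendsto_natCast_div_sub_one : Tendsto (fun k : ℕ => (k : ℝ) / (k - 1)) atTop (𝓝 1) := by
  simpa [← sub_eq_add_neg] using tendsto_natCast_div_add_atTop (-1 : ℝ)

theorem tendsto_one_div_two_mul_natCast : Tendsto (fun k : ℕ => 1 / (2 * (k : ℝ))) atTop (𝓝 0) :=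
  tendsto_const_nhds.div_atTop (tendsto_natCast_atTop_atTop.const_mul_atTop two_pos)

theorem tendsto_zero_of_tendsto_natCast_mul {p : ℕ → ℝ}
    (hp : Tendsto (fun k : ℕ => k * p k) atTop (𝓝 0)) : Tendsto p atTop (𝓝 0) := by
  have := hp.mul tendsto_one_div_atTop_nhds_zero_nat
  rw [mul_zero] at this
  refine this.congr' ?_
  filter_upwards [eventually_gt_atTop 0] with k hk
  field_simp

theorem tendsto_add_one_div_two_mul {p : ℕ → ℝ}
    (hp : Tendsto (fun k : ℕ => k * p k) atTop (𝓝 0)) :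
    Tendsto (fun k : ℕ => p k + 1 / (2 * k)) atTop (𝓝 0) := by
  simpa using (tendsto_zero_of_tendsto_natCast_mul hp).add tendsto_one_div_two_mul_natCast

theorem tendsto_add_one_div_two_mul_mul_log {p : ℕ → ℝ}
    (hp : Tendsto (fun k : ℕ => k * p k) atTop (𝓝 0)) :
    Tendsto (fun k : ℕ => (p k + 1 / (2 * k)) * log k) atTop (𝓝 0) := by
  have := (hp.add_const (1 / 2)).mul tendsto_log_natCast_div_natCast
  rw [mul_zero] at this
  refine this.congr' ?_
  filter_upwards [eventually_gt_atTop 0] with k hk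
  field_simp

noncomputable def scaleD (β : ℝ) (k : ℕ) : ℝ := log k + log (log k) + β

section Asymptotics

variable (β : ℝ)

theorem tendsto_scaleD_div_log : Tendsto (fun k => scaleD β k / log k) atTop (𝓝 1) := by
  have hloglog : Tendsto (fun k : ℕ => log (log k) / log k) atTop (𝓝 0) := by
    simpa [Function.comp_def] using
      (tendsto_pow_log_div_mul_add_atTop 1 0 1 one_ne_zero).comp tendsto_log_natCast_atTop
  have hconst := tendsto_const_nhds (x := β).div_atTop tendsto_log_natCast_atTop
  have := (hloglog.add hconst).const_add 1
  rw [add_zero, add_zero] at this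
  refine this.congr' ?_
  filter_upwards [tendsto_log_natCast_atTop.eventually_gt_atTop 0] with k hk
  rw [scaleD]
  field_simp
  ring

theorem tendsto_scaleD_atTop : Tendsto (scaleD β) atTop atTop := by
  refine (tendsto_log_natCast_atTop.atTop_mul_pos one_pos (tendsto_scaleD_div_log β)).congr' ?_
  filter_upwards [tendsto_log_natCast_atTop.eventually_gt_atTop 0] with k hk
  field_simp

theorem tendsto_scaleD_div_natCast : Tendsto (fun k => scaleD β k / k) atTop (𝓝 0) := by
  have := (tendsto_scaleD_div_log β).mul tendsto_log_natCast_div_natCast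
  rw [mul_zero] at this
  refine this.congr' ?_
  filter_upwards [tendsto_log_natCast_atTop.eventually_gt_atTop 0] with k hk
  field_simp

theorem tendsto_exp_mul_scaleD_div_natCast {a : ℝ} (ha : a < 1) :
    Tendsto (fun k => exp (a * scaleD β k) / k) atTop (𝓝 0) := by
  have hlim : Tendsto (fun k => a * (scaleD β k / log k) - 1) atTop (𝓝 (a - 1)) := by
    simpa using ((tendsto_scaleD_div_log β).const_mul a).sub_const 1
  refine (tendsto_exp_atBot.comp
    (tendsto_log_natCast_atTop.atTop_mul_neg (by linarith) hlim)).congr' ?_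
  filter_upwards [tendsto_log_natCast_atTop.eventually_gt_atTop 0,
    eventually_gt_atTop 0] with k hk hk0
  have hk0' : (0 : ℝ) < k := by exact_mod_cast hk0
  rw [Function.comp_apply, show exp (a * scaleD β k) / k = exp (a * scaleD β k - log k) by
    rw [exp_sub, exp_log hk0']]
  congr 1
  field_simp

theorem exp_neg_scaleD {k : ℕ} (hk : 0 < log k) :
    exp (-scaleD β k) = exp (-β) / (k * log k) := by
  have hk0 : (0 : ℝ) < k := by linarith [(log_pos_iff k.cast_nonneg).1 hk]
  rw [scaleD, neg_add, neg_add, exp_add, exp_add, exp_neg, exp_neg, exp_log hk0, exp_log hk]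
  field_simp

theorem tendsto_mul_exp_neg_scaleD_mul_log :
    Tendsto (fun k : ℕ => (k - 1) * exp (-scaleD β k) * log k) atTop (𝓝 (exp (-β))) := by
  have := (tendsto_const_nhds (x := (1 : ℝ)).sub tendsto_one_div_atTop_nhds_zero_nat).mul_const
    (exp (-β))
  rw [sub_zero, one_mul] at this
  refine this.congr' ?_
  filter_upwards [tendsto_log_natCast_atTop.eventually_gt_atTop 0, eventually_gt_atTop 0]
    with k hk hk0
  rw [exp_neg_scaleD β hk]
  field_simp

theorem tendsto_mul_exp_neg_scaleD_mul_scaleD :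
    Tendsto (fun k : ℕ => (k - 1) * exp (-scaleD β k) * scaleD β k) atTop (𝓝 (exp (-β))) := by
  have := (tendsto_mul_exp_neg_scaleD_mul_log β).mul (tendsto_scaleD_div_log β)
  rw [mul_one] at this
  refine this.congr' ?_
  filter_upwards [tendsto_log_natCast_atTop.eventually_gt_atTop 0] with k hk
  field_simp

variable {p : ℕ → ℝ}

theorem eventually_low_bound (hp : Tendsto (fun k : ℕ => k * p k) atTop (𝓝 0)) :
    ∀ᶠ k : ℕ in atTop, p k + exp (2 / k * scaleD β k) / (k - 1) ≤ 2 / k - 1 / (2 * k) := by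
  have hlim : Tendsto (fun k : ℕ => k * p k + exp (2 * (scaleD β k / k)) * (k / (k - 1))) atTop
      (𝓝 1) := by
    simpa using hp.add (((continuous_exp.tendsto _).comp
      ((tendsto_scaleD_div_natCast β).const_mul 2)).mul tendsto_natCast_div_sub_one)
  filter_upwards [hlim.eventually_lt tendsto_const_nhds (by norm_num : (1 : ℝ) < 3 / 2),
    eventually_gt_atTop 1] with k hk hk1
  have hk1' : (1 : ℝ) < k := by exact_mod_cast hk1
  have hrewrite : p k + exp (2 / k * scaleD β k) / (k - 1)
      = (k * p k + exp (2 * (scaleD β k / k)) * (k / (k - 1))) / k := by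
    field_simp
  rw [hrewrite, show (2 : ℝ) / k - 1 / (2 * k) = 3 / 2 / k by ring]
  gcongr

theorem eventually_mid_bound (hp : Tendsto (fun k : ℕ => k * p k) atTop (𝓝 0)) {a : ℝ}
    (ha0 : 0 < a) (ha1 : a < 1) :
    ∀ᶠ k : ℕ in atTop, p k + exp (a * scaleD β k) / (k - 1) ≤ a - 1 / (2 * k) := by
  have hlhs : Tendsto (fun k : ℕ => p k + exp (a * scaleD β k) / k * (k / (k - 1))) atTop
      (𝓝 0) := by
    simpa using (tendsto_zero_of_tendsto_natCast_mul hp).add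
      ((tendsto_exp_mul_scaleD_div_natCast β ha1).mul tendsto_natCast_div_sub_one)
  have hrhs : Tendsto (fun k : ℕ => a - 1 / (2 * k)) atTop (𝓝 a) := by
    simpa using tendsto_one_div_two_mul_natCast.const_sub a
  filter_upwards [hlhs.eventually_lt hrhs ha0, eventually_gt_atTop 0] with k hk hk0
  rw [div_mul_div_cancel₀ (by positivity)] at hk
  exact hk.le

theorem eventually_high_slope_bound (hp : Tendsto (fun k : ℕ => k * p k) atTop (𝓝 0))
    {a θ : ℝ} (h : 2 < θ * a * exp (1 - β)) :
    ∀ᶠ k : ℕ in atTop,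
      2 ≤ θ * (a - (p k + 1 / (2 * k))) * ((k - 1) * exp (-scaleD β k))
        * (exp 1 * scaleD β k) := by
  have hlim := (((tendsto_add_one_div_two_mul hp).const_sub a).const_mul θ).mul
    ((tendsto_mul_exp_neg_scaleD_mul_scaleD β).const_mul (exp 1))
  rw [sub_zero, mul_assoc, ← exp_add, ← sub_eq_add_neg] at hlim
  filter_upwards [tendsto_const_nhds.eventually_lt hlim (h.trans_eq (mul_assoc _ _ _))] with k hk
  linarith

theorem eventually_high_offset_bound (hp : Tendsto (fun k : ℕ => k * p k) atTop (𝓝 0))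
    {a θ : ℝ} (ha : 0 < a) (hθ : θ < 1) :
    ∀ᶠ k : ℕ in atTop,
      2 * (p k + 1 / (2 * k))
        ≤ (1 - θ) * (a - (p k + 1 / (2 * k))) * ((k - 1) * exp (-scaleD β k)) := by
  have hlhs := (tendsto_add_one_div_two_mul_mul_log hp).const_mul 2
  have hrhs := (((tendsto_add_one_div_two_mul hp).const_sub a).const_mul (1 - θ)).mul
    (tendsto_mul_exp_neg_scaleD_mul_log β)
  rw [mul_zero] at hlhs
  rw [sub_zero] at hrhs
  filter_upwards [hlhs.eventually_lt hrhs (mul_pos (mul_pos (sub_pos.2 hθ) ha) (exp_pos _)),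
    tendsto_log_natCast_atTop.eventually_gt_atTop 0] with k hk hlog
  refine (lt_of_mul_lt_mul_right (a := log k) ?_ hlog.le).le
  convert hk using 1 <;> ring

end Asymptotics

theorem stmt_13 (β : ℝ) (hβ : β < 1 - Real.log 2)
    (D : ℕ → ℝ) (hD : ∀ k, D k = Real.log k + Real.log (Real.log k) + β)
    (p : ℕ → ℝ) (hp0 : ∀ k, 0 ≤ p k)
    (hp : Tendsto (fun k : ℕ => (k : ℝ) * p k) atTop (nhds 0))
    (g : ℕ → ℝ → ℝ)
    (hg : ∀ k y, g k y = p k +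
      (1 - Real.exp (-((k : ℝ) - 1) * Real.exp (-(y * D k))))
        / (((k : ℝ) - 1) * Real.exp (-(y * D k))))
    (y : ℕ → ℕ → ℝ) (hy0 : ∀ k, y k 0 = 1)
    (hyrec : ∀ k n, y k (n + 1) = g k (y k n)) :
    ∀ᶠ k : ℕ in atTop, Filter.limsup (fun n => y k n) atTop < 2 / (k : ℝ) := by
  have hE : 2 < exp (1 - β) := by
    rw [← exp_log two_pos]
    exact exp_lt_exp.2 (by linarith)
  obtain ⟨a, h2a, ha1⟩ := exists_between ((div_lt_one (by positivity)).2 hE)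
  have ha0 : 0 < a := lt_trans (by positivity) h2a
  obtain ⟨θ, hθ, hθ1⟩ := exists_between ((div_lt_one ha0).2 h2a)
  have hθa : 2 < θ * a * exp (1 - β) := by
    rwa [div_lt_iff₀ ha0, div_lt_iff₀ (by positivity)] at hθ
  obtain rfl : D = scaleD β := funext hD
  filter_upwards [eventually_low_bound β hp, eventually_mid_bound β hp ha0 ha1,
    eventually_high_slope_bound β hp hθa, eventually_high_offset_bound β hp ha0 hθ1,
    (tendsto_scaleD_atTop β).eventually_ge_atTop 0, eventually_ge_atTop 2]
    with k hlow hmid hhigh₁ hhigh₂ hd hk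
  have hk' : (2 : ℝ) ≤ k := by exact_mod_cast hk
  have horbit : ∀ n, y k (n + 1) = recursionMap k (scaleD β k) (p k) (y k n) := fun n => by
    rw [hyrec, hg, recursionMap, neg_mul]
  calc limsup (y k) atTop ≤ 2 / k - 1 / (2 * k) :=
        limsup_orbit_recursionMap_le (by linarith) hd (hp0 k) (by positivity)
          (lt_trans (by positivity) hθ).le hθ1.le ((div_le_one (by positivity)).2 hk') hlow hmid
          hhigh₁ hhigh₂ (hy0 k) horbit
    _ < 2 / k := sub_lt_self _ (by positivity)
end

section
/- Let β* > 1 and D = log k + log log k + β*. Then for all sufficiently large k, the function f(x) = (1 - exp(-xD))^{k-1} - s, with s = s(k) satisfying k·s(k) → 0, satisfies f(1 - 1/log k) > 1 - 1/log k. Consequently the sequence p₀ = 1, p_{n+1} ≥ f(p_n) with f increasing stays above 1 - 1/log k for all n. -/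
/-!
Put `L = log k` and `x = 1 - 1/L`. Since `(log L + β)/L → 0`, for large `k` we have
`x·D ≥ L + log L + δ` with `δ = (β - 1)/2 > 0`, so `e^{-xD} ≤ e^{-δ}/(kL)`. Bernoulli's inequality
then gives `(1 - e^{-xD})^{k-1} ≥ 1 - e^{-δ}/L`, while `s < (1 - e^{-δ})/k ≤ (1 - e^{-δ})/L` because
`k s → 0`; together `f x > x`. As `f` is monotone and `x ≤ p 0 = 1`, induction then gives
`x ≤ f (p n) ≤ p (n + 1)`.
-/

open Filter Real

lemma one_sub_mul_le_one_sub_pow {y : ℝ} (hy : y ≤ 2) (n : ℕ) : 1 - n * y ≤ (1 - y) ^ n := by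
  simpa [sub_eq_add_neg] using one_add_mul_le_pow (a := -y) (by linarith) n

lemma eventually_add_log_add_le_mul {β δ : ℝ} (hδ : δ < β - 1) :
    ∀ᶠ L : ℝ in atTop, L + log L + δ ≤ (1 - 1 / L) * (L + log L + β) := by
  have hsmall : Tendsto (fun L : ℝ => (log L + β) / L) atTop (nhds 0) := by
    simpa [add_div] using isLittleO_log_id_atTop.tendsto_div_nhds_zero.add
      (tendsto_const_nhds.div_atTop tendsto_id : Tendsto (fun L : ℝ => β / L) atTop (nhds 0))
  filter_upwards [hsmall.eventually_le_const (show (0 : ℝ) < β - 1 - δ by linarith),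
    eventually_gt_atTop 0] with L hL hL0
  have hexpand : (1 - 1 / L) * (L + log L + β) = L + log L + β - 1 - (log L + β) / L := by
    field_simp
    ring
  linarith

lemma exp_neg_log_add_log_log_add (k : ℕ) (hk : 1 < k) (δ : ℝ) :
    exp (-(log k + log (log k) + δ)) = exp (-δ) / (k * log k) := by
  have hk0 : (0 : ℝ) < k := by positivity
  have hL0 : 0 < log (k : ℝ) := log_pos (by exact_mod_cast hk)
  rw [show -(log k + log (log k) + δ) = -δ - log k - log (log k) by ring, exp_sub, exp_sub,
    exp_log hk0, exp_log hL0, div_div]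

lemma one_sub_inv_log_lt_pow_sub {k : ℕ} (hk : 3 ≤ k) {δ z s : ℝ} (hδ : 0 ≤ δ)
    (hz : log k + log (log k) + δ ≤ z) (hs : k * s < 1 - exp (-δ)) :
    1 - 1 / log k < (1 - exp (-z)) ^ (k - 1) - s := by
  have hk0 : (0 : ℝ) < k := by positivity
  have hL1 : 1 ≤ log (k : ℝ) := by
    rw [le_log_iff_exp_le hk0]
    have hk3 : (3 : ℝ) ≤ k := by exact_mod_cast hk
    linarith [exp_one_lt_d9]
  have hLk : log (k : ℝ) ≤ k := (log_le_sub_one_of_pos hk0).trans (by linarith)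
  have hz0 : 0 ≤ z := by linarith [log_nonneg hL1]
  set y := exp (-z)
  have hy0 : 0 < y := exp_pos _
  have hy : y ≤ exp (-δ) / (k * log k) :=
    exp_neg_log_add_log_log_add k (by omega) δ ▸ exp_le_exp.mpr (by linarith)
  have hky : k * y ≤ exp (-δ) / log k := by
    calc k * y ≤ k * (exp (-δ) / (k * log k)) := by gcongr
      _ = exp (-δ) / log k := by field_simp
  have hbernoulli : 1 - (k - 1 : ℕ) * y ≤ (1 - y) ^ (k - 1) :=
    one_sub_mul_le_one_sub_pow (by linarith [exp_le_one_iff.mpr (neg_nonpos.mpr hz0)]) _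
  have hcast : ((k - 1 : ℕ) : ℝ) = k - 1 := Nat.cast_pred (by omega)
  have hsk : s < (1 - exp (-δ)) / log k := by
    calc s < (1 - exp (-δ)) / k := by rw [lt_div_iff₀ hk0]; linarith
      _ ≤ (1 - exp (-δ)) / log k := by gcongr; simpa using hδ
  have hsplit : 1 / log (k : ℝ) = exp (-δ) / log k + (1 - exp (-δ)) / log k := by ring
  rw [hcast] at hbernoulli
  linarith

theorem stmt_14 (β : ℝ) (hβ : 1 < β)
    (D : ℕ → ℝ) (hD : ∀ k, D k = Real.log k + Real.log (Real.log k) + β)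
    (s : ℕ → ℝ) (hs : Tendsto (fun k : ℕ => (k : ℝ) * s k) atTop (nhds 0))
    (f : ℕ → ℝ → ℝ)
    (hf : ∀ k x, f k x = (1 - Real.exp (-(x * D k))) ^ (k - 1) - s k) :
    ∀ᶠ k : ℕ in atTop,
      (1 - 1 / Real.log k < f k (1 - 1 / Real.log k)) ∧
      ∀ p : ℕ → ℝ, p 0 = 1 → (∀ n, f k (p n) ≤ p (n + 1)) → Monotone (f k) →
        ∀ n, 1 - 1 / Real.log k ≤ p n := by
  have hgap : 0 < 1 - exp (-((β - 1) / 2)) := sub_pos.mpr (exp_lt_one_iff.mpr (by linarith))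
  have hlog : Tendsto (fun k : ℕ => log k) atTop atTop :=
    tendsto_log_atTop.comp tendsto_natCast_atTop_atTop
  filter_upwards [eventually_ge_atTop 3, hs.eventually_lt_const hgap,
    hlog.eventually (eventually_add_log_add_le_mul (show (β - 1) / 2 < β - 1 by linarith))]
    with k hk hsk hxD
  have hfix : 1 - 1 / log k < f k (1 - 1 / log k) := by
    rw [hf, hD]
    exact one_sub_inv_log_lt_pow_sub hk (by linarith) hxD hsk
  refine ⟨hfix, fun p hp0 hp hmono n => ?_⟩
  refine hmono.seq_le_seq (x := fun _ => 1 - 1 / log k) n ?_ (fun _ _ => hfix.le) (fun m _ => hp m)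
  simp only [hp0, sub_le_self_iff]
  positivity
end
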